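/- arXiv:2503.16700 — 5 statements merged into one kernel-verified Lean document; each statement's English description precedes it below -/
import Mathlib

section
/- The AGT2 ODE vector field f is quasi-monotone increasing on ℝ^{S×A} × ℝ^{S×A} (viewed as ℝ^{2|S||A|}). -/
open Finset

/-- Maximum of `Q s' a'` over actions `a'`. -/
noncomputable def maxQ {S A : Type*} [Fintype A] [Nonempty A]
    (Q : S → A → ℝ) (s' : S) : ℝ :=
  univ.sup' univ_nonempty (fun a' => Q s' a')

/-- The Bellman optimality operator. -/
noncomputable def bellmanT {S A : Type*} [Fintype S] [Fintype A] [Nonempty A]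
    (P r : S → A → S → ℝ) (γ : ℝ) (Q : S → A → ℝ) : S → A → ℝ :=
  fun s a => ∑ s', P s a s' * (r s a s' + γ * maxQ Q s')

/-- A map `F : ℝ^ι → ℝ^ι` is quasi-monotone increasing if for every index `i` and all
`x, y` with `x i = y i` and `x j ≤ y j` for all `j ≠ i`, one has `F x i ≤ F y i`. -/
def QuasiMonotone {ι : Type*} (F : (ι → ℝ) → ι → ℝ) : Prop :=
  ∀ (i : ι) (x y : ι → ℝ), x i = y i → (∀ j, j ≠ i → x j ≤ y j) → F x i ≤ F y i

/-- The AGT2 ODE vector field on `ℝ^{S×A} × ℝ^{S×A}`, indexed by `(S × A) ⊕ (S × A)`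
(the first summand carries `x₁`, the second carries `x₂`). -/
noncomputable def agt2Field {S A : Type*} [Fintype S] [Fintype A] [Nonempty A]
    (P : S → A → S → ℝ) (γ β : ℝ) (d : S → A → ℝ) (Qstar : S → A → ℝ)
    (x : (S × A) ⊕ (S × A) → ℝ) : (S × A) ⊕ (S × A) → ℝ :=
  Sum.elim
    (fun p => -(d p.1 p.2) * x (Sum.inl p) +
      γ * d p.1 p.2 * ∑ s', P p.1 p.2 s' *
        ((univ.sup' univ_nonempty fun a' => x (Sum.inr (s', a')) + Qstar s' a') -
          univ.sup' univ_nonempty fun a' => Qstar s' a'))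
    (fun p => β * d p.1 p.2 * (x (Sum.inl p) - x (Sum.inr p)))

/-- The AGT2 upper comparison field. -/
noncomputable def agt2Upper {S A : Type*} [Fintype S] [Fintype A] [Nonempty A]
    (P : S → A → S → ℝ) (γ β : ℝ) (d : S → A → ℝ)
    (x : (S × A) ⊕ (S × A) → ℝ) : (S × A) ⊕ (S × A) → ℝ :=
  Sum.elim
    (fun p => -(d p.1 p.2) * x (Sum.inl p) +
      γ * d p.1 p.2 * ∑ s', P p.1 p.2 s' *
        (univ.sup' univ_nonempty fun a' => x (Sum.inr (s', a'))))
    (fun p => β * d p.1 p.2 * (x (Sum.inl p) - x (Sum.inr p)))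

/-- The AGT2 lower comparison field (a linear map), defined relative to a greedy
policy `πstar` for `Q*`. -/
noncomputable def agt2Lower {S A : Type*} [Fintype S]
    (P : S → A → S → ℝ) (γ β : ℝ) (d : S → A → ℝ) (πstar : S → A)
    (x : (S × A) ⊕ (S × A) → ℝ) : (S × A) ⊕ (S × A) → ℝ :=
  Sum.elim
    (fun p => -(d p.1 p.2) * x (Sum.inl p) +
      γ * d p.1 p.2 * ∑ s', P p.1 p.2 s' * x (Sum.inr (s', πstar s')))
    (fun p => β * d p.1 p.2 * (x (Sum.inl p) - x (Sum.inr p)))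

/-! Once `x i = y i`, the hypotheses of quasi-monotonicity say `x ≤ y`. Each component of the
AGT2 field is monotone in every coordinate but its own (weights `γ d P ≥ 0` on the shifted maxima,
`β d > 0` on `x₁`), and its own coordinate takes the same value at `x` and `y`. -/

theorem Pi.le_of_eq_of_forall_ne_le {ι α : Type*} [Preorder α] {x y : ι → α} {i : ι}
    (hi : x i = y i) (hne : ∀ j, j ≠ i → x j ≤ y j) : x ≤ y := by
  intro j
  by_cases hj : j = i
  · exact hj ▸ hi.le
  · exact hne j hj

theorem agt2Field_quasiMonotone_general
    {S A : Type*} [Fintype S] [Fintype A] [Nonempty A]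
    (P : S → A → S → ℝ) (γ : ℝ) (hγ0 : 0 ≤ γ)
    (hP0 : ∀ s a s', 0 ≤ P s a s')
    (Qstar : S → A → ℝ)
    (β : ℝ) (hβ : 0 < β)
    (d : S → A → ℝ) (hd : ∀ s a, 0 < d s a) :
    QuasiMonotone (agt2Field P γ β d Qstar) := by
  intro i x y hi hne
  have hxy : x ≤ y := Pi.le_of_eq_of_forall_ne_le hi hne
  rcases i with p | p <;> simp only [agt2Field, Sum.elim_inl, Sum.elim_inr, hi]
  · have hdp := hd p.1 p.2
    gcongr
    · exact hP0 _ _ _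
    · exact hxy _
  · have hdp := hd p.1 p.2
    gcongr
    exact hxy _

theorem agt2Field_quasiMonotone
    {S A : Type*} [Fintype S] [Fintype A] [Nonempty S] [Nonempty A]
    (P r : S → A → S → ℝ) (γ : ℝ) (hγ0 : 0 ≤ γ) (hγ1 : γ < 1)
    (hP0 : ∀ s a s', 0 ≤ P s a s') (hP1 : ∀ s a, ∑ s', P s a s' = 1)
    (Qstar : S → A → ℝ) (hQstar : bellmanT P r γ Qstar = Qstar)
    (β : ℝ) (hβ : 0 < β)
    (d : S → A → ℝ) (hd : ∀ s a, 0 < d s a) :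
    QuasiMonotone (agt2Field P γ β d Qstar) :=
  agt2Field_quasiMonotone_general P γ hγ0 hP0 Qstar β hβ d hd
end

section
/- Let x : [0,∞) → ℝ^{S×A} × ℝ^{S×A} be a differentiable curve with x'(t) = f(x(t)) for all t ≥ 0, and let x^u : [0,∞) → ℝ^{S×A} × ℝ^{S×A} be a differentiable curve with (x^u)'(t) = h(x^u(t)) for all t ≥ 0 and x^u(0) > x(0) componentwise (strict in every coordinate). Then x^u(t) ≥ x(t) componentwise for all t ≥ 0. -/
open Finset

/-! The squared negative part `φ t = ∑ i, min (xu t i - x t i) 0 ^ 2` vanishes at `t = 0`.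
The upper field is quasi-monotone, Lipschitz for the sup norm, and dominates the AGT2 field
(since `max (x₂ + Q*) - max Q* ≤ max x₂`), and these three facts give `φ' ≤ K φ`; by Grönwall,
`φ` stays zero. -/

lemma hasDerivAt_min_zero_sq (u : ℝ) :
    HasDerivAt (fun v : ℝ => min v 0 ^ 2) (2 * min u 0) u := by
  rw [hasDerivAt_iff_isLittleO]
  refine (Asymptotics.IsBigO.of_bound 1 (Filter.Eventually.of_forall fun v => ?_)).trans_isLittleO
    (Asymptotics.isLittleO_pow_sub_sub u one_lt_two)
  simp only [smul_eq_mul, Real.norm_eq_abs, one_mul, abs_pow, sq_abs]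
  -- the remainder lies in `[0, (v - u) ^ 2]`, by convexity and a sign case split
  rw [abs_le]
  constructor <;> rcases min_cases v 0 with ⟨hv, _⟩ | ⟨hv, _⟩ <;>
    rcases min_cases u 0 with ⟨hu, _⟩ | ⟨hu, _⟩ <;> rw [hv, hu] <;> nlinarith

lemma nonpos_of_hasDerivAt_le_mul {φ φ' : ℝ → ℝ} {K : ℝ}
    (hφ : ∀ t, 0 ≤ t → HasDerivAt φ (φ' t) t) (hφ' : ∀ t, 0 ≤ t → φ' t ≤ K * φ t)
    (h0 : φ 0 ≤ 0) {t : ℝ} (ht : 0 ≤ t) : φ t ≤ 0 := by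
  have := le_gronwallBound_of_liminf_deriv_right_le (f' := φ') (ε := 0)
    (fun s hs => (hφ s hs.1).continuousAt.continuousWithinAt)
    (fun s hs _ hr => (hφ s hs.1).hasDerivWithinAt.liminf_right_slope_le hr) h0
    (fun s hs => by simpa using hφ' s hs.1) t ⟨ht, le_rfl⟩
  rwa [gronwallBound_ε0_δ0] at this

lemma min_zero_mul_le {w D a b M : ℝ} (ha : 0 ≤ a) (hb : 0 ≤ b)
    (hwM : -M ≤ w) (hD : -(a * w) - b * M ≤ D) : min w 0 * D ≤ b * M ^ 2 := by
  rcases min_cases w 0 with ⟨h, hw⟩ | ⟨h, hw⟩ <;> rw [h]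
  · have hM : 0 ≤ M := by linarith
    nlinarith [mul_nonneg (neg_nonneg.mpr hw) (sub_nonneg.mpr hD), mul_nonneg ha (sq_nonneg w),
      mul_nonneg (mul_nonneg hb hM) (neg_le_iff_add_nonneg.mp hwM)]
  · simpa using mul_nonneg hb (sq_nonneg M)

section Comparison

variable {ι : Type*} [Fintype ι]

lemma sum_min_zero_mul_le {a b w D : ι → ℝ} (ha : ∀ i, 0 ≤ a i) (hb : ∀ i, 0 ≤ b i)
    (hD : ∀ M, (∀ j, -M ≤ w j) → ∀ i, -(a i * w i) - b i * M ≤ D i) :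
    ∑ i, min (w i) 0 * D i ≤ (∑ i, b i) * ∑ i, min (w i) 0 ^ 2 := by
  set M := √(∑ i, min (w i) 0 ^ 2)
  have hwM : ∀ j, -M ≤ w j := fun j => by
    have : |min (w j) 0| ≤ M :=
      Real.abs_le_sqrt (single_le_sum (fun i _ => sq_nonneg (min (w i) 0)) (mem_univ j))
    linarith [neg_abs_le (min (w j) 0), min_le_left (w j) 0]
  rw [← Real.sq_sqrt (sum_nonneg fun i _ => sq_nonneg (min (w i) 0)), sum_mul]
  exact sum_le_sum fun i _ =>
    min_zero_mul_le (ha i) (hb i) (hwM i) (hD M hwM i)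

/-- The hypothesis `hFG` holds as soon as `F ≤ G` and `G` is quasi-monotone and Lipschitz for
the sup norm. -/
theorem le_of_hasDerivAt_of_field_sub_ge {F G : (ι → ℝ) → ι → ℝ} {a b : ι → ℝ}
    (ha : ∀ i, 0 ≤ a i) (hb : ∀ i, 0 ≤ b i)
    (hFG : ∀ u v M, (∀ j, -M ≤ u j - v j) → ∀ i, -(a i * (u i - v i)) - b i * M ≤ G u i - F v i)
    {x y : ℝ → ι → ℝ} (hx : ∀ t, 0 ≤ t → HasDerivAt x (F (x t)) t)
    (hy : ∀ t, 0 ≤ t → HasDerivAt y (G (y t)) t) (h0 : x 0 ≤ y 0) {t : ℝ} (ht : 0 ≤ t) :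
    x t ≤ y t := by
  set φ : ℝ → ℝ := fun t => ∑ i, min (y t i - x t i) 0 ^ 2
  have hφ : ∀ t, 0 ≤ t → HasDerivAt φ
      (∑ i, 2 * min (y t i - x t i) 0 * (G (y t) i - F (x t) i)) t := fun t ht =>
    HasDerivAt.fun_sum fun i _ => by
      simpa only [Function.comp_def, Pi.sub_apply, mul_assoc] using
        (hasDerivAt_min_zero_sq _).comp t
          ((hasDerivAt_pi.mp (hy t ht) i).sub (hasDerivAt_pi.mp (hx t ht) i))
  have hφ' : ∀ t, 0 ≤ t → ∑ i, 2 * min (y t i - x t i) 0 * (G (y t) i - F (x t) i)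
      ≤ (2 * ∑ i, b i) * φ t := fun t _ => by
    simp only [φ, mul_assoc, ← mul_sum]
    exact mul_le_mul_of_nonneg_left (sum_min_zero_mul_le ha hb (hFG (y t) (x t))) zero_le_two
  have hφ0 : φ 0 ≤ 0 := by
    simp [φ, fun i => min_eq_right (sub_nonneg.mpr (h0 i))]
  have hφt : φ t = 0 :=
    (nonpos_of_hasDerivAt_le_mul hφ hφ' hφ0 ht).antisymm (sum_nonneg fun j _ => sq_nonneg _)
  have hneg (i : ι) : min (y t i - x t i) 0 ^ 2 = 0 :=
    (sum_eq_zero_iff_of_nonneg fun j _ => sq_nonneg _).mp hφt i (mem_univ i)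
  intro i
  linarith [min_eq_right_iff.mp (pow_eq_zero_iff two_ne_zero |>.mp (hneg i))]

end Comparison

lemma sup'_add_le_sup'_add_sup' {α : Type*} {s : Finset α} (hs : s.Nonempty) (f g : α → ℝ) :
    s.sup' hs (fun a => f a + g a) ≤ s.sup' hs f + s.sup' hs g :=
  sup'_le _ _ fun _ ha => add_le_add (le_sup' f ha) (le_sup' g ha)

lemma sup'_sub_le_sup' {α : Type*} {s : Finset α} (hs : s.Nonempty) {f g : α → ℝ} {M : ℝ}
    (hfg : ∀ a ∈ s, g a - M ≤ f a) : s.sup' hs g - M ≤ s.sup' hs f :=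
  sub_le_iff_le_add.mpr <| sup'_le _ _ fun a ha =>
    sub_le_iff_le_add.mp ((hfg a ha).trans (le_sup' f ha))

lemma le_sum_mul_of_forall_le {α : Type*} [Fintype α] {p c : α → ℝ} {m : ℝ}
    (hp0 : ∀ a, 0 ≤ p a) (hp1 : ∑ a, p a = 1) (hc : ∀ a, m ≤ c a) : m ≤ ∑ a, p a * c a :=
  calc m = ∑ a, p a * m := by rw [← sum_mul, hp1, one_mul]
    _ ≤ ∑ a, p a * c a := sum_le_sum fun a _ => mul_le_mul_of_nonneg_left (hc a) (hp0 a)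

lemma agt2Upper_sub_agt2Field_ge {S A : Type*} [Fintype S] [Fintype A] [Nonempty A]
    {P : S → A → S → ℝ} {γ β : ℝ} {d Qstar : S → A → ℝ} (hγ : 0 ≤ γ) (hβ : 0 ≤ β)
    (hP0 : ∀ s a s', 0 ≤ P s a s') (hP1 : ∀ s a, ∑ s', P s a s' = 1) (hd : ∀ s a, 0 ≤ d s a)
    {u v : (S × A) ⊕ (S × A) → ℝ} {M : ℝ} (huv : ∀ j, -M ≤ u j - v j) (i : (S × A) ⊕ (S × A)) :
    -(Sum.elim (fun p => d p.1 p.2) (fun p => β * d p.1 p.2) i * (u i - v i)) -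
        Sum.elim (fun p => γ * d p.1 p.2) (fun p => β * d p.1 p.2) i * M ≤
      agt2Upper P γ β d u i - agt2Field P γ β d Qstar v i := by
  rcases i with ⟨s, a⟩ | ⟨s, a⟩
  · have hnext : ∀ s', -M ≤ (univ.sup' univ_nonempty fun a' => u (Sum.inr (s', a'))) -
        ((univ.sup' univ_nonempty fun a' => v (Sum.inr (s', a')) + Qstar s' a') -
          univ.sup' univ_nonempty fun a' => Qstar s' a') := fun s' => by
      have hmax := sup'_add_le_sup'_add_sup' univ_nonempty
        (fun a' => v (Sum.inr (s', a'))) (fun a' => Qstar s' a')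
      have hshift := sup'_sub_le_sup' univ_nonempty (M := M)
        (f := fun a' => u (Sum.inr (s', a'))) (g := fun a' => v (Sum.inr (s', a')))
        fun a' _ => by linarith [huv (Sum.inr (s', a'))]
      linarith
    have hexp := mul_le_mul_of_nonneg_left (le_sum_mul_of_forall_le (hP0 s a) (hP1 s a) hnext)
      (mul_nonneg hγ (hd s a))
    simp only [agt2Upper, agt2Field, Sum.elim_inl, mul_sub, sum_sub_distrib] at hexp ⊢
    linarith
  · simp only [agt2Upper, agt2Field, Sum.elim_inr]
    nlinarith [huv (Sum.inl (s, a)), mul_nonneg hβ (hd s a)]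

theorem agt2_upper_comparison_solutions_general
    {S A : Type*} [Fintype S] [Fintype A] [Nonempty A]
    (P : S → A → S → ℝ) (γ : ℝ) (hγ0 : 0 ≤ γ)
    (hP0 : ∀ s a s', 0 ≤ P s a s') (hP1 : ∀ s a, ∑ s', P s a s' = 1)
    (Qstar : S → A → ℝ)
    (β : ℝ) (hβ : 0 < β)
    (d : S → A → ℝ) (hd : ∀ s a, 0 < d s a)
    (x xu : ℝ → (S × A) ⊕ (S × A) → ℝ)
    (hx : ∀ t : ℝ, 0 ≤ t → HasDerivAt x (agt2Field P γ β d Qstar (x t)) t)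
    (hxu : ∀ t : ℝ, 0 ≤ t → HasDerivAt xu (agt2Upper P γ β d (xu t)) t)
    (h0 : ∀ i, x 0 i < xu 0 i) :
    ∀ t : ℝ, 0 ≤ t → ∀ i, x t i ≤ xu t i := by
  have hd0 : ∀ s a, 0 ≤ d s a := fun s a => (hd s a).le
  have hdamp : ∀ i,
      0 ≤ Sum.elim (fun p : S × A => d p.1 p.2) (fun p : S × A => β * d p.1 p.2) i := by
    rintro (p | p)
    exacts [hd0 _ _, mul_nonneg hβ.le (hd0 _ _)]
  have hcoup : ∀ i,
      0 ≤ Sum.elim (fun p : S × A => γ * d p.1 p.2) (fun p : S × A => β * d p.1 p.2) i := by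
    rintro (p | p)
    exacts [mul_nonneg hγ0 (hd0 _ _), mul_nonneg hβ.le (hd0 _ _)]
  intro t ht
  exact le_of_hasDerivAt_of_field_sub_ge hdamp hcoup
    (fun _ _ _ huv => agt2Upper_sub_agt2Field_ge hγ0 hβ.le hP0 hP1 hd0 huv) hx hxu
    (fun i => (h0 i).le) ht

theorem agt2_upper_comparison_solutions
    {S A : Type*} [Fintype S] [Fintype A] [Nonempty S] [Nonempty A]
    (P r : S → A → S → ℝ) (γ : ℝ) (hγ0 : 0 ≤ γ) (hγ1 : γ < 1)
    (hP0 : ∀ s a s', 0 ≤ P s a s') (hP1 : ∀ s a, ∑ s', P s a s' = 1)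
    (Qstar : S → A → ℝ) (hQstar : bellmanT P r γ Qstar = Qstar)
    (β : ℝ) (hβ : 0 < β)
    (d : S → A → ℝ) (hd : ∀ s a, 0 < d s a)
    (x xu : ℝ → (S × A) ⊕ (S × A) → ℝ)
    (hx : ∀ t : ℝ, 0 ≤ t → HasDerivAt x (agt2Field P γ β d Qstar (x t)) t)
    (hxu : ∀ t : ℝ, 0 ≤ t → HasDerivAt xu (agt2Upper P γ β d (xu t)) t)
    (h0 : ∀ i, x 0 i < xu 0 i) :
    ∀ t : ℝ, 0 ≤ t → ∀ i, x t i ≤ xu t i :=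
  agt2_upper_comparison_solutions_general P γ hγ0 hP0 hP1 Qstar β hβ d hd x xu hx hxu h0
end

section
/- Let x : [0,∞) → ℝ^{S×A} × ℝ^{S×A} be a differentiable curve with x'(t) = f(x(t)) for all t ≥ 0, and let x^l : [0,∞) → ℝ^{S×A} × ℝ^{S×A} be a differentiable curve with (x^l)'(t) = g(x^l(t)) for all t ≥ 0 and x^l(0) < x(0) componentwise (strict in every coordinate). Then x(t) ≥ x^l(t) componentwise for all t ≥ 0. -/
open Finset

/-!
Because `π*` is greedy for `Q*`, the lower field `g` lies below `f` pointwise, and `g` is linear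
and quasi-monotone (its off-diagonal coefficients are nonnegative). Hence `x` is a supersolution
of `x' = g x`, while `xl` shifted down by `δ e^{Kt}`, with `K` above every entry of `g 1`, is a
strict subsolution. A strict sub- and supersolution that start ordered can never touch: at a first
touching time in a coordinate `i` the difference would have positive derivative there although it
was positive just before. Letting `δ → 0` gives the claim.
-/

open Filter Topology

theorem pos_of_hasDerivAt_of_pos_at_touch {ι : Type*} [Fintype ι] {u u' : ℝ → ι → ℝ}
    (hu : ∀ t, 0 ≤ t → HasDerivAt u (u' t) t) (h0 : ∀ i, 0 < u 0 i)
    (htouch : ∀ t, 0 < t → 0 ≤ u t → ∀ i, u t i = 0 → 0 < u' t i) :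
    ∀ t, 0 ≤ t → ∀ i, 0 < u t i := by
  by_contra! hneg
  set E := Set.Ici 0 ∩ u ⁻¹' {v | ∃ i, v i ≤ 0}
  have hE_closed : IsClosed E := by
    refine ContinuousOn.preimage_isClosed_of_isClosed
      (fun t ht => (hu t ht).continuousAt.continuousWithinAt) isClosed_Ici ?_
    simpa only [Set.ofPred_exists] using
      isClosed_iUnion_of_finite fun i => isClosed_le (continuous_apply i) continuous_const
  have hE_bdd : BddBelow E := ⟨0, fun _ ht => ht.1⟩
  obtain ⟨t, ht, i, hi⟩ := hneg
  obtain ⟨hT0, i, hTi⟩ : sInf E ∈ E := hE_closed.csInf_mem ⟨t, ht, i, hi⟩ hE_bdd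
  set T := sInf E
  have hTpos : 0 < T := hT0.lt_of_ne' fun h => (h0 i).not_ge (h ▸ hTi)
  have hbefore : ∀ᶠ s in 𝓝[<] T, ∀ j, 0 < u s j := by
    filter_upwards [Ioo_mem_nhdsLT hTpos] with s hs j
    exact not_le.1 fun h => (csInf_le hE_bdd ⟨hs.1.le, j, h⟩).not_gt hs.2
  have hT_nonneg : 0 ≤ u T := fun j =>
    ge_of_tendsto ((continuous_apply j).continuousAt.tendsto.comp
      ((hu T hT0).continuousAt.tendsto.mono_left nhdsWithin_le_nhds))
      (hbefore.mono fun s hs => (hs j).le)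
  have hTi0 : u T i = 0 := le_antisymm hTi (hT_nonneg i)
  have hderiv := htouch T hTpos hT_nonneg i hTi0
  have hslope : ∀ᶠ s in 𝓝[<] T, 0 < slope (fun s => u s i) T s :=
    ((hasDerivAt_pi.1 (hu T hT0) i).tendsto_slope.mono_left (nhdsLT_le_nhdsNE T)).eventually
      (eventually_gt_nhds hderiv)
  obtain ⟨s, hs_pos, hs_slope, hs_lt⟩ :=
    (hbefore.and (hslope.and self_mem_nhdsWithin)).exists
  exact (hs_pos i).not_gt (neg_of_slope_pos hs_lt hs_slope hTi0)

theorem le_of_hasDerivAt_of_quasiMonotone {ι : Type*} [Fintype ι] {F G : (ι → ℝ) → ι → ℝ}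
    (hG_lin : IsLinearMap ℝ G) (hG : QuasiMonotone G) (hGF : ∀ v, G v ≤ F v)
    {x y : ℝ → ι → ℝ} (hx : ∀ t, 0 ≤ t → HasDerivAt x (F (x t)) t)
    (hy : ∀ t, 0 ≤ t → HasDerivAt y (G (y t)) t) (h0 : y 0 ≤ x 0) :
    ∀ t, 0 ≤ t → y t ≤ x t := by
  obtain ⟨K, hK⟩ := Finite.exists_le fun i => G 1 i + 1
  have hlt : ∀ δ > 0, ∀ t, 0 ≤ t → ∀ i,
      0 < (x t - (y t - (δ * Real.exp (K * t)) • 1)) i := by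
    intro δ hδ
    set c : ℝ → ℝ := fun t => δ * Real.exp (K * t)
    have hc : ∀ t, HasDerivAt c (K * c t) t := fun t => by
      simpa [c, mul_comm, mul_left_comm] using
        (((hasDerivAt_id t).const_mul K).exp).const_mul δ
    refine pos_of_hasDerivAt_of_pos_at_touch (u := fun t => x t - (y t - c t • 1))
      (fun t ht => (hx t ht).sub ((hy t ht).sub ((hc t).smul_const 1))) ?_ ?_
    · intro i
      simp only [c, Pi.sub_apply, Pi.smul_apply, Pi.one_apply, smul_eq_mul, mul_zero,
        Real.exp_zero, mul_one]
      linarith [h0 i]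
    · intro t _ hnonneg i hi
      have hmono : G (y t - c t • 1) i ≤ G (x t) i :=
        hG i _ _ (sub_eq_zero.1 hi).symm fun j _ => sub_nonneg.1 (hnonneg j)
      have hGy : G (y t) = G (y t - c t • 1) + c t • G 1 := by
        rw [← hG_lin.map_smul, ← hG_lin.map_add, sub_add_cancel]
      have hgap : c t * G 1 i < K * c t := by
        nlinarith [hK i, show 0 < c t by positivity]
      have hGF_i := hGF (x t) i
      simp only [hGy, Pi.sub_apply, Pi.add_apply, Pi.smul_apply, Pi.one_apply, smul_eq_mul,
        mul_one]
      linarith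
  intro t ht i
  refine le_of_forall_pos_le_add fun ε hε => ?_
  have := hlt (ε / Real.exp (K * t)) (by positivity) t ht i
  simp only [Pi.sub_apply, Pi.smul_apply, Pi.one_apply, smul_eq_mul, mul_one,
    div_mul_cancel₀ _ (Real.exp_pos _).ne'] at this
  linarith

theorem Finset.apply_le_sup'_add_sub_sup' {α : Type*} {s : Finset α} (hs : s.Nonempty)
    (f g : α → ℝ) {a : α} (ha : a ∈ s) (hmax : ∀ b ∈ s, g b ≤ g a) :
    f a ≤ s.sup' hs (fun b => f b + g b) - s.sup' hs g := by
  have hg : s.sup' hs g = g a := le_antisymm (Finset.sup'_le hs g hmax) (Finset.le_sup' g ha)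
  have hfg : f a + g a ≤ s.sup' hs (fun b => f b + g b) :=
    Finset.le_sup' (fun b => f b + g b) ha
  rw [hg]
  linarith

section Agt2

variable {S A : Type*} [Fintype S] (P : S → A → S → ℝ) (γ β : ℝ) (d : S → A → ℝ)

theorem agt2Lower_isLinearMap (πstar : S → A) : IsLinearMap ℝ (agt2Lower P γ β d πstar) := by
  constructor
  · intro x y
    ext (p | p) <;>
      simp only [agt2Lower, Sum.elim_inl, Sum.elim_inr, Pi.add_apply, mul_add,
        Finset.sum_add_distrib] <;> ring
  · intro c x
    ext (p | p) <;>
      simp only [agt2Lower, Sum.elim_inl, Sum.elim_inr, Pi.smul_apply, smul_eq_mul,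
        mul_left_comm _ c, ← Finset.mul_sum] <;> ring

variable {P γ β d}

theorem agt2Lower_quasiMonotone (hγ : 0 ≤ γ) (hP : ∀ s a s', 0 ≤ P s a s') (hβ : 0 ≤ β)
    (hd : ∀ s a, 0 ≤ d s a) (πstar : S → A) : QuasiMonotone (agt2Lower P γ β d πstar) := by
  rintro (p | p) x y hxy hle
  · have hsum : ∑ s', P p.1 p.2 s' * x (.inr (s', πstar s')) ≤
        ∑ s', P p.1 p.2 s' * y (.inr (s', πstar s')) :=
      Finset.sum_le_sum fun s' _ =>
        mul_le_mul_of_nonneg_left (hle _ Sum.inr_ne_inl) (hP _ _ _)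
    simp only [agt2Lower, Sum.elim_inl, hxy]
    gcongr
    exact mul_nonneg hγ (hd _ _)
  · simp only [agt2Lower, Sum.elim_inr, hxy]
    have hle_inl := hle (.inl p) Sum.inl_ne_inr
    have hcoef := mul_nonneg hβ (hd p.1 p.2)
    gcongr

theorem agt2Lower_le_agt2Field [Fintype A] [Nonempty A] (hγ : 0 ≤ γ)
    (hP : ∀ s a s', 0 ≤ P s a s') (hd : ∀ s a, 0 ≤ d s a) {Qstar : S → A → ℝ}
    {πstar : S → A} (hπstar : ∀ s a, Qstar s a ≤ Qstar s (πstar s))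
    (x : (S × A) ⊕ (S × A) → ℝ) :
    agt2Lower P γ β d πstar x ≤ agt2Field P γ β d Qstar x := by
  rintro (p | p)
  · simp only [agt2Lower, agt2Field, Sum.elim_inl]
    gcongr with s' _
    · exact mul_nonneg hγ (hd _ _)
    · exact hP _ _ _
    · exact Finset.apply_le_sup'_add_sub_sup' _ (fun a' => x (.inr (s', a'))) (Qstar s')
        (Finset.mem_univ _) fun a _ => hπstar s' a
  · simp [agt2Lower, agt2Field]

end Agt2

theorem agt2_lower_comparison_solutions_general
    {S A : Type*} [Fintype S] [Fintype A] [Nonempty A]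
    (P : S → A → S → ℝ) (γ : ℝ) (hγ0 : 0 ≤ γ)
    (hP0 : ∀ s a s', 0 ≤ P s a s')
    (Qstar : S → A → ℝ)
    (β : ℝ) (hβ : 0 < β)
    (d : S → A → ℝ) (hd : ∀ s a, 0 < d s a)
    (πstar : S → A) (hπstar : ∀ s a, Qstar s a ≤ Qstar s (πstar s))
    (x xl : ℝ → (S × A) ⊕ (S × A) → ℝ)
    (hx : ∀ t : ℝ, 0 ≤ t → HasDerivAt x (agt2Field P γ β d Qstar (x t)) t)
    (hxl : ∀ t : ℝ, 0 ≤ t → HasDerivAt xl (agt2Lower P γ β d πstar (xl t)) t)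
    (h0 : ∀ i, xl 0 i < x 0 i) :
    ∀ t : ℝ, 0 ≤ t → ∀ i, xl t i ≤ x t i := by
  have hd' : ∀ s a, 0 ≤ d s a := fun s a => (hd s a).le
  intro t ht
  exact le_of_hasDerivAt_of_quasiMonotone (agt2Lower_isLinearMap P γ β d πstar)
    (agt2Lower_quasiMonotone hγ0 hP0 hβ.le hd' πstar)
    (agt2Lower_le_agt2Field hγ0 hP0 hd' hπstar) hx hxl (fun i => (h0 i).le) t ht

theorem agt2_lower_comparison_solutions
    {S A : Type*} [Fintype S] [Fintype A] [Nonempty S] [Nonempty A]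
    (P r : S → A → S → ℝ) (γ : ℝ) (hγ0 : 0 ≤ γ) (hγ1 : γ < 1)
    (hP0 : ∀ s a s', 0 ≤ P s a s') (hP1 : ∀ s a, ∑ s', P s a s' = 1)
    (Qstar : S → A → ℝ) (hQstar : bellmanT P r γ Qstar = Qstar)
    (β : ℝ) (hβ : 0 < β)
    (d : S → A → ℝ) (hd : ∀ s a, 0 < d s a)
    (πstar : S → A) (hπstar : ∀ s a, Qstar s a ≤ Qstar s (πstar s))
    (x xl : ℝ → (S × A) ⊕ (S × A) → ℝ)
    (hx : ∀ t : ℝ, 0 ≤ t → HasDerivAt x (agt2Field P γ β d Qstar (x t)) t)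
    (hxl : ∀ t : ℝ, 0 ≤ t → HasDerivAt xl (agt2Lower P γ β d πstar (xl t)) t)
    (h0 : ∀ i, xl 0 i < x 0 i) :
    ∀ t : ℝ, 0 ≤ t → ∀ i, xl t i ≤ x t i :=
  agt2_lower_comparison_solutions_general P γ hγ0 hP0 Qstar β hβ d hd πstar hπstar x xl hx hxl h0
end

section
/- For any β > 0, the AGT2 lower comparison system (a linear ODE) is globally attractive at the origin: every differentiable curve x : [0,∞) → ℝ^{S×A} × ℝ^{S×A} satisfying x'(t) = g(x(t)) for all t ≥ 0 converges to 0 (componentwise) as t → ∞. -/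
open Finset

open Filter

/-! The lower field is `x ↦ M x` for a Metzler matrix `M` (nonnegative off-diagonal entries),
and `M v < 0` for the positive weight `v = (1, c)` on the blocks `(x₁, x₂)`, for any
`1 < c < 1/γ`. For a Metzler matrix, `z_i (M z)_i ≤ K² v_i (M v)_i` at any point `z` of the box
`|z_j| ≤ K v_j` with `|z_i| = K v_i`, so for small `μ > 0` the flow of `M + μ` points strictly
into every such box. Hence `e^{μt} x(t)` stays in the box containing `x(0)`, and `x(t)` decays
like `e^{-μt}`. -/

open Topology Set Matrix

theorem eventually_abs_lt_of_mul_deriv_neg {f : ℝ → ℝ} {f' t : ℝ} (hf : HasDerivAt f f' t)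
    (hneg : f t * f' < 0) : ∀ᶠ u in 𝓝[>] t, |f u| < |f t| := by
  have hsq : HasDerivAt (f * f) (f' * f t + f t * f') t := hf.mul hf
  filter_upwards [hsq.hasDerivWithinAt.limsup_slope_le' (lt_irrefl t) (r := 0) (by linarith),
    self_mem_nhdsWithin] with u hslope (hu : t < u)
  rw [slope_def_field, div_lt_iff₀ (sub_pos.2 hu), zero_mul, sub_neg] at hslope
  exact sq_lt_sq.1 (by simpa only [sq, Pi.mul_apply] using hslope)

theorem abs_le_of_inward_on_boundary {ι : Type*} [Fintype ι] {y y' : ℝ → ι → ℝ} {b : ι → ℝ}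
    (hy : ∀ t, 0 ≤ t → HasDerivAt y (y' t) t) (h0 : ∀ i, |y 0 i| ≤ b i)
    (hinward : ∀ t, 0 ≤ t → (∀ j, |y t j| ≤ b j) → ∀ i, |y t i| = b i → y t i * y' t i < 0)
    {t : ℝ} (ht : 0 ≤ t) (i : ι) : |y t i| ≤ b i := by
  have hbox : IsClosed {z : ι → ℝ | ∀ j, |z j| ≤ b j} := by
    simp only [ofPred_forall]
    exact isClosed_iInter fun j => isClosed_le (continuous_apply j).abs continuous_const
  have hcont : ContinuousOn y (Icc 0 t) := fun u hu =>
    (hy u hu.1).continuousAt.continuousWithinAt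
  have hclosed := hcont.preimage_isClosed_of_isClosed isClosed_Icc hbox
  rw [inter_comm] at hclosed
  refine hclosed.Icc_subset_of_forall_mem_nhdsWithin h0 ?_ ⟨ht, le_rfl⟩ i
  rintro u ⟨hu, hu0, -⟩
  refine eventually_all.2 fun j => ?_
  have hyj := hasDerivAt_pi.1 (hy u hu0) j
  rcases (hu j).lt_or_eq with hlt | heq
  · exact (hyj.continuousAt.abs.eventually_lt continuousAt_const hlt).filter_mono
      nhdsWithin_le_nhds |>.mono fun _ => le_of_lt
  · exact (eventually_abs_lt_of_mul_deriv_neg hyj (hinward u hu0 hu j heq)).mono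
      fun _ h => heq ▸ h.le

namespace Matrix

def IsMetzler {ι : Type*} (M : Matrix ι ι ℝ) : Prop :=
  ∀ i j, i ≠ j → 0 ≤ M i j

variable {ι : Type*} [Fintype ι]

theorem IsMetzler.mul_mulVec_le {M : Matrix ι ι ℝ} (hM : M.IsMetzler) {z w : ι → ℝ}
    (hzw : ∀ j, |z j| ≤ w j) {i : ι} (hi : |z i| = w i) :
    z i * (M *ᵥ z) i ≤ w i * (M *ᵥ w) i := by
  simp only [mulVec, dotProduct, Finset.mul_sum]
  refine Finset.sum_le_sum fun j _ => ?_
  rcases eq_or_ne i j with rfl | hij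
  · rw [mul_left_comm, ← abs_mul_abs_self, hi, mul_left_comm]
  · have hprod : z i * z j ≤ w i * w j := calc
      z i * z j ≤ |z i| * |z j| := by rw [← abs_mul]; exact le_abs_self _
      _ ≤ w i * w j := mul_le_mul (hzw i) (hzw j) (abs_nonneg _) (hi ▸ abs_nonneg _)
    calc z i * (M i j * z j) = M i j * (z i * z j) := by ring
      _ ≤ M i j * (w i * w j) := mul_le_mul_of_nonneg_left hprod (hM i j hij)
      _ = w i * (M i j * w j) := by ring

theorem IsMetzler.mul_mulVec_add_smul_neg {M : Matrix ι ι ℝ} (hM : M.IsMetzler)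
    {v : ι → ℝ} {μ K : ℝ} (hK : 0 < K) (hv : ∀ i, 0 < v i)
    (hMv : ∀ i, (M *ᵥ v) i + μ * v i < 0) {z : ι → ℝ} (hz : ∀ j, |z j| ≤ (K • v) j) {i : ι}
    (hi : |z i| = (K • v) i) : z i * (M *ᵥ z + μ • z) i < 0 := by
  have hle := hM.mul_mulVec_le hz hi
  simp only [Pi.add_apply, Pi.smul_apply, smul_eq_mul, mulVec_smul] at hle hi ⊢
  have hsq : z i * z i = (K * v i) * (K * v i) := by rw [← abs_mul_abs_self, hi]
  calc z i * ((M *ᵥ z) i + μ * z i)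
      = z i * (M *ᵥ z) i + μ * (z i * z i) := by ring
    _ ≤ K * v i * (K * (M *ᵥ v) i) + μ * ((K * v i) * (K * v i)) := by rw [hsq]; linarith
    _ = (K * K * v i) * ((M *ᵥ v) i + μ * v i) := by ring
    _ < 0 := mul_neg_of_pos_of_neg (by have := hv i; positivity) (hMv i)

theorem IsMetzler.exists_abs_le_exp_neg {M : Matrix ι ι ℝ} (hM : M.IsMetzler) {v : ι → ℝ}
    (hv : ∀ i, 0 < v i) (hMv : ∀ i, (M *ᵥ v) i < 0) {x : ℝ → ι → ℝ}
    (hx : ∀ t, 0 ≤ t → HasDerivAt x (M *ᵥ x t) t) :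
    ∃ μ > 0, ∃ K, ∀ t, 0 ≤ t → ∀ i, |x t i| ≤ K * v i * Real.exp (-(μ * t)) := by
  obtain ⟨μ, hμv, hμ⟩ : ∃ μ, (∀ i, (M *ᵥ v) i + μ * v i < 0) ∧ 0 < μ := by
    refine ((eventually_all.2 fun i => ?_).and self_mem_nhdsWithin).exists (f := 𝓝[>] 0)
    refine nhdsWithin_le_nhds (ContinuousAt.eventually_lt (by fun_prop) continuousAt_const ?_)
    simpa using hMv i
  obtain ⟨K, hK0v, hK⟩ : ∃ K, (∀ i, |x 0 i| ≤ K * v i) ∧ 0 < K := by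
    refine ((eventually_all.2 fun i => ?_).and (eventually_gt_atTop 0)).exists
    exact (tendsto_id.atTop_mul_const (hv i)).eventually_ge_atTop _
  set y : ℝ → ι → ℝ := fun t => Real.exp (μ * t) • x t with hy_def
  have hy : ∀ t, 0 ≤ t → HasDerivAt y (M *ᵥ y t + μ • y t) t := by
    intro t ht
    refine (((hasDerivAt_id t).const_mul μ).exp.smul (hx t ht)).congr_deriv ?_
    simp only [hy_def, id, mul_one, mulVec_smul, smul_smul]
    module
  refine ⟨μ, hμ, K, fun t ht i => ?_⟩
  have hbound := abs_le_of_inward_on_boundary hy (by simpa [hy_def] using hK0v)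
    (fun _ _ hbox _ hi => hM.mul_mulVec_add_smul_neg hK hv hμv hbox hi) ht i
  simp only [hy_def, Pi.smul_apply, smul_eq_mul, abs_mul, Real.abs_exp] at hbound
  rw [Real.exp_neg, ← div_eq_mul_inv, le_div_iff₀ (Real.exp_pos _)]
  linarith

theorem IsMetzler.tendsto_zero_of_hasDerivAt {M : Matrix ι ι ℝ} (hM : M.IsMetzler)
    {v : ι → ℝ} (hv : ∀ i, 0 < v i) (hMv : ∀ i, (M *ᵥ v) i < 0) {x : ℝ → ι → ℝ}
    (hx : ∀ t, 0 ≤ t → HasDerivAt x (M *ᵥ x t) t) : Tendsto x atTop (𝓝 0) := by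
  obtain ⟨μ, hμ, K, hK⟩ := hM.exists_abs_le_exp_neg hv hMv hx
  refine tendsto_pi_nhds.2 fun i =>
    squeeze_zero_norm' (a := fun t => K * v i * Real.exp (-(μ * t))) ?_ ?_
  · filter_upwards [eventually_ge_atTop 0] with t ht using hK t ht i
  · simpa using (Real.tendsto_exp_neg_atTop_nhds_zero.comp
      (tendsto_id.const_mul_atTop hμ)).const_mul (K * v i)

end Matrix

section AGT2

variable {S A : Type*} [DecidableEq S] [DecidableEq A]

noncomputable def agt2LowerMatrix (P : S → A → S → ℝ) (γ β : ℝ) (d : S → A → ℝ)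
    (πstar : S → A) : Matrix ((S × A) ⊕ (S × A)) ((S × A) ⊕ (S × A)) ℝ :=
  fromBlocks (diagonal fun p => -d p.1 p.2)
    (of fun p q => if q.2 = πstar q.1 then γ * d p.1 p.2 * P p.1 p.2 q.1 else 0)
    (diagonal fun p => β * d p.1 p.2) (diagonal fun p => -(β * d p.1 p.2))

theorem agt2Lower_eq_mulVec [Fintype S] [Fintype A] (P : S → A → S → ℝ) (γ β : ℝ)
    (d : S → A → ℝ) (πstar : S → A) (x : (S × A) ⊕ (S × A) → ℝ) :
    agt2Lower P γ β d πstar x = agt2LowerMatrix P γ β d πstar *ᵥ x := by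
  ext (p | p)
  · rw [agt2LowerMatrix, fromBlocks_mulVec]
    simp only [agt2Lower, Sum.elim_inl, Pi.add_apply, mulVec_diagonal]
    simp [mulVec, dotProduct, Fintype.sum_prod_type, Finset.mul_sum, mul_assoc]
  · simp only [agt2Lower, agt2LowerMatrix, fromBlocks_mulVec, Sum.elim_inr, Pi.add_apply,
      mulVec_diagonal, Function.comp_apply]
    ring

theorem agt2LowerMatrix_isMetzler {P : S → A → S → ℝ} {γ β : ℝ} {d : S → A → ℝ}
    (hP : ∀ s a s', 0 ≤ P s a s') (hγ : 0 ≤ γ) (hβ : 0 ≤ β) (hd : ∀ s a, 0 ≤ d s a)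
    (πstar : S → A) : (agt2LowerMatrix P γ β d πstar).IsMetzler := by
  rintro (p | p) (q | q) hpq
  · simp [agt2LowerMatrix, diagonal_apply_ne _ (ne_of_apply_ne _ hpq)]
  · simp only [agt2LowerMatrix, fromBlocks_apply₁₂, of_apply]
    split_ifs
    exacts [mul_nonneg (mul_nonneg hγ (hd _ _)) (hP _ _ _), le_rfl]
  · simp only [agt2LowerMatrix, fromBlocks_apply₂₁, diagonal_apply]
    split_ifs
    exacts [mul_nonneg hβ (hd _ _), le_rfl]
  · simp [agt2LowerMatrix, diagonal_apply_ne _ (ne_of_apply_ne _ hpq)]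

theorem agt2LowerMatrix_mulVec_neg [Fintype S] [Fintype A] {P : S → A → S → ℝ} {γ β c : ℝ}
    {d : S → A → ℝ} (hP : ∀ s a, ∑ s', P s a s' = 1) (hβ : 0 < β) (hd : ∀ s a, 0 < d s a)
    (hc : 1 < c) (hγc : γ * c < 1) (πstar : S → A) (i : (S × A) ⊕ (S × A)) :
    (agt2LowerMatrix P γ β d πstar *ᵥ Sum.elim (fun _ => 1) (fun _ => c)) i < 0 := by
  rw [← agt2Lower_eq_mulVec]
  rcases i with p | p
  · have hdp := hd p.1 p.2
    simp only [agt2Lower, Sum.elim_inl, Sum.elim_inr, ← Finset.sum_mul, hP]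
    nlinarith
  · have hdp := hd p.1 p.2
    simp only [agt2Lower, Sum.elim_inl, Sum.elim_inr]
    nlinarith [mul_pos hβ hdp]

end AGT2

theorem agt2_lower_system_globally_attractive_general
    {S A : Type*} [Fintype S] [Fintype A]
    (P : S → A → S → ℝ) (γ : ℝ) (hγ0 : 0 ≤ γ) (hγ1 : γ < 1)
    (hP0 : ∀ s a s', 0 ≤ P s a s') (hP1 : ∀ s a, ∑ s', P s a s' = 1)
    (β : ℝ) (hβ : 0 < β)
    (d : S → A → ℝ) (hd : ∀ s a, 0 < d s a)
    (πstar : S → A)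
    (x : ℝ → (S × A) ⊕ (S × A) → ℝ)
    (hx : ∀ t : ℝ, 0 ≤ t → HasDerivAt x (agt2Lower P γ β d πstar (x t)) t) :
    ∀ i, Tendsto (fun t => x t i) atTop (nhds 0) := by
  classical
  set c := 2 / (1 + γ)
  have hc : 1 < c := by rw [lt_div_iff₀ (by linarith)]; linarith
  have hγc : γ * c < 1 := by rw [mul_div_assoc', div_lt_one (by linarith)]; linarith
  have hv : ∀ i : (S × A) ⊕ (S × A), 0 < Sum.elim (fun _ => 1) (fun _ => c) i := by
    rintro (_ | _) <;> simp only [Sum.elim_inl, Sum.elim_inr] <;> linarith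
  simp only [agt2Lower_eq_mulVec] at hx
  have hM := agt2LowerMatrix_isMetzler hP0 hγ0 hβ.le (fun s a => (hd s a).le) πstar
  exact tendsto_pi_nhds.1 <|
    hM.tendsto_zero_of_hasDerivAt hv (agt2LowerMatrix_mulVec_neg hP1 hβ hd hc hγc πstar) hx

theorem agt2_lower_system_globally_attractive
    {S A : Type*} [Fintype S] [Fintype A] [Nonempty S] [Nonempty A]
    (P r : S → A → S → ℝ) (γ : ℝ) (hγ0 : 0 ≤ γ) (hγ1 : γ < 1)
    (hP0 : ∀ s a s', 0 ≤ P s a s') (hP1 : ∀ s a, ∑ s', P s a s' = 1)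
    (Qstar : S → A → ℝ) (hQstar : bellmanT P r γ Qstar = Qstar)
    (β : ℝ) (hβ : 0 < β)
    (d : S → A → ℝ) (hd : ∀ s a, 0 < d s a)
    (πstar : S → A) (hπstar : ∀ s a, Qstar s a ≤ Qstar s (πstar s))
    (x : ℝ → (S × A) ⊕ (S × A) → ℝ)
    (hx : ∀ t : ℝ, 0 ≤ t → HasDerivAt x (agt2Lower P γ β d πstar (x t)) t) :
    ∀ i, Tendsto (fun t => x t i) atTop (nhds 0) :=
  agt2_lower_system_globally_attractive_general P γ hγ0 hγ1 hP0 hP1 β hβ d hd πstar x hx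
end

section
/- The SGT2 ODE vector field f is quasi-monotone increasing on ℝ^{S×A} × ℝ^{S×A} (viewed as ℝ^{2|S||A|}). -/
open Finset

/-- Sup norm on `ℝ^{S×A}`. -/
noncomputable def supNorm {S A : Type*} [Fintype S] [Fintype A] [Nonempty S] [Nonempty A]
    (Q : S → A → ℝ) : ℝ :=
  univ.sup' univ_nonempty (fun p : S × A => |Q p.1 p.2|)

/-- The SGT2 ODE vector field on `ℝ^{S×A} × ℝ^{S×A}`, indexed by `(S × A) ⊕ (S × A)`
(the first summand carries `x₁`, the second carries `x₂`). -/
noncomputable def sgt2Field {S A : Type*} [Fintype S] [Fintype A] [Nonempty A]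
    (P : S → A → S → ℝ) (γ β : ℝ) (d : S → A → ℝ) (Qstar : S → A → ℝ)
    (x : (S × A) ⊕ (S × A) → ℝ) : (S × A) ⊕ (S × A) → ℝ :=
  Sum.elim
    (fun p => -((1 + β) * d p.1 p.2) * x (Sum.inl p) + β * d p.1 p.2 * x (Sum.inr p) +
      γ * d p.1 p.2 * ∑ s', P p.1 p.2 s' *
        ((univ.sup' univ_nonempty fun a' => x (Sum.inr (s', a')) + Qstar s' a') -
          univ.sup' univ_nonempty fun a' => Qstar s' a'))
    (fun p => -((1 + β) * d p.1 p.2) * x (Sum.inr p) + β * d p.1 p.2 * x (Sum.inl p) +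
      γ * d p.1 p.2 * ∑ s', P p.1 p.2 s' *
        ((univ.sup' univ_nonempty fun a' => x (Sum.inl (s', a')) + Qstar s' a') -
          univ.sup' univ_nonempty fun a' => Qstar s' a'))

/-! Each component of the field depends on its own coordinate only through the linear term
`-(1 + β) d x`; in every other coordinate it is a nonnegative combination (weights `β d`, `γ d P`)
of that coordinate and of maxima of it, hence monotone. -/

theorem maxQ_mono {S A : Type*} [Fintype A] [Nonempty A] {Q Q' : S → A → ℝ}
    (h : ∀ s a, Q s a ≤ Q' s a) (s : S) : maxQ Q s ≤ maxQ Q' s :=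
  sup'_mono_fun fun a _ => h s a

noncomputable def sgt2Component {S A : Type*} [Fintype S] [Fintype A] [Nonempty A]
    (P : S → A → S → ℝ) (γ β : ℝ) (d : S → A → ℝ) (Qstar : S → A → ℝ)
    (u v : S × A → ℝ) (p : S × A) : ℝ :=
  -((1 + β) * d p.1 p.2) * u p + β * d p.1 p.2 * v p +
    γ * d p.1 p.2 * ∑ s', P p.1 p.2 s' *
      (maxQ (fun s a => v (s, a) + Qstar s a) s' - maxQ Qstar s')

section

variable {S A : Type*} [Fintype S] [Fintype A] [Nonempty A]
  {P : S → A → S → ℝ} {γ β : ℝ} {d : S → A → ℝ} (Qstar : S → A → ℝ)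

theorem sgt2Field_inl (x : (S × A) ⊕ (S × A) → ℝ) (p : S × A) :
    sgt2Field P γ β d Qstar x (Sum.inl p) =
      sgt2Component P γ β d Qstar (x ∘ Sum.inl) (x ∘ Sum.inr) p :=
  rfl

theorem sgt2Field_inr (x : (S × A) ⊕ (S × A) → ℝ) (p : S × A) :
    sgt2Field P γ β d Qstar x (Sum.inr p) =
      sgt2Component P γ β d Qstar (x ∘ Sum.inr) (x ∘ Sum.inl) p :=
  rfl

theorem sgt2Component_mono (hP : ∀ s a s', 0 ≤ P s a s') (hγ : 0 ≤ γ) (hβ : 0 ≤ β)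
    (hd : ∀ s a, 0 ≤ d s a) {u u' v v' : S × A → ℝ} {p : S × A} (hu : u p = u' p)
    (hv : v ≤ v') :
    sgt2Component P γ β d Qstar u v p ≤ sgt2Component P γ β d Qstar u' v' p := by
  unfold sgt2Component
  rw [hu]
  gcongr with s' _
  · exact mul_nonneg hβ (hd _ _)
  · exact hv p
  · exact mul_nonneg hγ (hd _ _)
  · exact hP _ _ _
  · exact maxQ_mono (fun s a => add_le_add_left (hv (s, a)) _) s'

end

theorem sgt2Field_quasiMonotone_general
    {S A : Type*} [Fintype S] [Fintype A] [Nonempty A]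
    (P : S → A → S → ℝ) (γ : ℝ) (hγ0 : 0 ≤ γ)
    (hP0 : ∀ s a s', 0 ≤ P s a s')
    (Qstar : S → A → ℝ)
    (β : ℝ) (hβ : 0 < β)
    (d : S → A → ℝ) (hd : ∀ s a, 0 < d s a) :
    QuasiMonotone (sgt2Field P γ β d Qstar) := by
  have hd' : ∀ s a, 0 ≤ d s a := fun s a => (hd s a).le
  rintro (p | p) x y hxy hle
  · rw [sgt2Field_inl, sgt2Field_inl]
    exact sgt2Component_mono Qstar hP0 hγ0 hβ.le hd' hxy
      fun q => hle (Sum.inr q) Sum.inr_ne_inl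
  · rw [sgt2Field_inr, sgt2Field_inr]
    exact sgt2Component_mono Qstar hP0 hγ0 hβ.le hd' hxy
      fun q => hle (Sum.inl q) Sum.inl_ne_inr

theorem sgt2Field_quasiMonotone
    {S A : Type*} [Fintype S] [Fintype A] [Nonempty S] [Nonempty A]
    (P r : S → A → S → ℝ) (γ : ℝ) (hγ0 : 0 ≤ γ) (hγ1 : γ < 1)
    (hP0 : ∀ s a s', 0 ≤ P s a s') (hP1 : ∀ s a, ∑ s', P s a s' = 1)
    (Qstar : S → A → ℝ) (hQstar : bellmanT P r γ Qstar = Qstar)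
    (β : ℝ) (hβ : 0 < β)
    (d : S → A → ℝ) (hd : ∀ s a, 0 < d s a) :
    QuasiMonotone (sgt2Field P γ β d Qstar) :=
  sgt2Field_quasiMonotone_general P γ hγ0 hP0 Qstar β hβ d hd
end
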